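/- Let A, B be real with A⁴ − B² = −1 (so B² = A⁴ + 1 > 0). Then Im F₂ = 0, where Im F₂ = −∫₁^∞ (A² + A⁴)/((2A²s + B²)√(s² − 1)) ds + (1/2)∫₁^∞ log(2A²s + B²)/((s+1)√(s² − 1)) ds. -/

import Mathlib

/-!
Put a = A², so that B² = a² + 1. The substitution w = √((s - 1)/(s + 1)) (that is, w = tanh (t/2)
for s = cosh t) satisfies dw = ds / ((s + 1)√(s² - 1)) and maps (1, ∞) onto (0, 1). It turns the
first integrand into a (1/((1 + a) + (1 - a)w) + 1/((1 + a) - (1 - a)w)) dw and the logarithm in the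
second into log ((1 + a)² - (1 - a)²w²) - log (1 - w²). Both have antiderivatives in w, built from
log and x log x, that are continuous on [0, 1]; for a ≠ 1 the first integral is a log a / (a - 1)
and the second twice that, and for a = 1 they are 1 and 2.
-/

open MeasureTheory Set Filter Topology Real

noncomputable def tanhHalf (s : ℝ) : ℝ := √(s - 1) / √(s + 1)

lemma tanhHalf_one : tanhHalf 1 = 0 := by simp [tanhHalf]

lemma tanhHalf_pos {s : ℝ} (hs : 1 < s) : 0 < tanhHalf s :=
  div_pos (sqrt_pos.2 (by linarith)) (sqrt_pos.2 (by linarith))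

lemma tanhHalf_lt_one {s : ℝ} (hs : 1 < s) : tanhHalf s < 1 := by
  rw [tanhHalf, div_lt_one (sqrt_pos.2 (by linarith))]
  exact sqrt_lt_sqrt (by linarith) (by linarith)

lemma tanhHalf_sq_mul {s : ℝ} (hs : 1 < s) : tanhHalf s ^ 2 * (s + 1) = s - 1 := by
  rw [tanhHalf, div_pow, sq_sqrt (by linarith), sq_sqrt (by linarith)]
  field_simp

lemma continuousAt_tanhHalf_one : ContinuousAt tanhHalf 1 := by
  unfold tanhHalf
  fun_prop (disch := norm_num)

lemma hasDerivAt_tanhHalf {s : ℝ} (hs : 1 < s) :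
    HasDerivAt tanhHalf (1 / ((s + 1) * √(s ^ 2 - 1))) s := by
  have h₁ : (0 : ℝ) < s - 1 := by linarith
  have h₂ : (0 : ℝ) < s + 1 := by linarith
  have d₁ : HasDerivAt (fun t => √(t - 1)) (1 / (2 * √(s - 1))) s := by
    simpa [Function.comp_def] using (hasDerivAt_sqrt h₁.ne').comp s ((hasDerivAt_id s).sub_const 1)
  have d₂ : HasDerivAt (fun t => √(t + 1)) (1 / (2 * √(s + 1))) s := by
    simpa [Function.comp_def] using (hasDerivAt_sqrt h₂.ne').comp s ((hasDerivAt_id s).add_const 1)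
  have hd : HasDerivAt tanhHalf _ s := d₁.div d₂ (sqrt_pos.2 h₂).ne'
  convert hd using 1
  rw [show s ^ 2 - 1 = (s - 1) * (s + 1) by ring, sqrt_mul h₁.le]
  have e₁ : √(s - 1) ^ 2 = s - 1 := sq_sqrt h₁.le
  have e₂ : √(s + 1) ^ 2 = s + 1 := sq_sqrt h₂.le
  have := sqrt_pos.2 h₁
  have := sqrt_pos.2 h₂
  field_simp
  linear_combination (s + 1) * e₁ + (1 - s) * e₂

lemma tendsto_tanhHalf_atTop : Tendsto tanhHalf atTop (𝓝[<] 1) := by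
  refine tendsto_nhdsWithin_iff.2 ⟨?_, eventually_gt_atTop 1 |>.mono fun s => tanhHalf_lt_one⟩
  have hlim : Tendsto (fun s : ℝ => 1 - 2 / (s + 1)) atTop (𝓝 1) := by
    simpa using tendsto_const_nhds.sub (tendsto_const_nhds (x := (2 : ℝ)).div_atTop
      (tendsto_atTop_add_const_right _ 1 tendsto_id))
  refine (by simpa [Function.comp_def] using (continuous_sqrt.tendsto 1).comp hlim :
    Tendsto (fun s : ℝ => √(1 - 2 / (s + 1))) atTop (𝓝 1)).congr' ?_
  filter_upwards [eventually_gt_atTop 1] with s hs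
  rw [tanhHalf, ← sqrt_div (by linarith)]
  congr 1
  field_simp
  ring

theorem integral_Ioi_one_comp_tanhHalf_div {h H : ℝ → ℝ} (hH : ContinuousOn H (Icc 0 1))
    (hH' : ∀ w ∈ Ioo (0 : ℝ) 1, HasDerivAt H (h w) w) (hh : ∀ w ∈ Ioo (0 : ℝ) 1, 0 ≤ h w) :
    ∫ s in Ioi (1 : ℝ), h (tanhHalf s) / ((s + 1) * √(s ^ 2 - 1)) = H 1 - H 0 := by
  have hmem : ∀ s ∈ Ioi (1 : ℝ), tanhHalf s ∈ Ioo 0 1 :=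
    fun s hs => ⟨tanhHalf_pos hs, tanhHalf_lt_one hs⟩
  have hcont : ContinuousWithinAt (H ∘ tanhHalf) (Ici 1) 1 := by
    refine (hH (tanhHalf 1) (by simp [tanhHalf_one])).comp
      continuousAt_tanhHalf_one.continuousWithinAt fun s hs => ?_
    rcases (mem_Ici.1 hs).eq_or_lt with rfl | hs
    · simp [tanhHalf_one]
    · exact Ioo_subset_Icc_self (hmem s hs)
  have hlim : Tendsto (H ∘ tanhHalf) atTop (𝓝 (H 1)) :=
    ((hH 1 (by simp)).mono_of_mem_nhdsWithin (Icc_mem_nhdsLT one_pos)).tendsto.comp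
      tendsto_tanhHalf_atTop
  rw [integral_Ioi_of_hasDerivAt_of_nonneg hcont (fun s hs => ?_) (fun s hs => ?_) hlim,
    Function.comp_apply, tanhHalf_one]
  · simpa only [mul_one_div] using (hH' _ (hmem s hs)).comp s (hasDerivAt_tanhHalf hs)
  · exact div_nonneg (hh _ (hmem s hs)) (mul_nonneg (by linarith [mem_Ioi.1 hs]) (sqrt_nonneg _))

noncomputable def mulLogDiff (c d w : ℝ) : ℝ :=
  (c + d * w) * log (c + d * w) - (c - d * w) * log (c - d * w)

lemma mulLogDiff_zero (c d : ℝ) : mulLogDiff c d 0 = 0 := by simp [mulLogDiff]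

@[fun_prop]
lemma continuous_mulLogDiff (c d : ℝ) : Continuous (mulLogDiff c d) := by
  unfold mulLogDiff
  have := continuous_mul_log
  fun_prop

lemma hasDerivAt_mulLogDiff {c d w : ℝ} (hp : c + d * w ≠ 0) (hm : c - d * w ≠ 0) :
    HasDerivAt (mulLogDiff c d) (d * (log (c + d * w) + log (c - d * w) + 2)) w := by
  have hp' := (hasDerivAt_mul_log hp).comp w (((hasDerivAt_id w).const_mul d).const_add c)
  have hm' := (hasDerivAt_mul_log hm).comp w (((hasDerivAt_id w).const_mul d).const_sub c)
  have hd : HasDerivAt (mulLogDiff c d) _ w := hp'.sub hm'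
  convert hd using 1
  ring

noncomputable def ratIntegrand (a w : ℝ) : ℝ :=
  a * (1 / (1 + a + (1 - a) * w) + 1 / (1 + a - (1 - a) * w))

noncomputable def logIntegrand (a w : ℝ) : ℝ :=
  log (1 + a + (1 - a) * w) + log (1 + a - (1 - a) * w) - (log (1 + w) + log (1 - w))

section

variable {a w : ℝ}

lemma integrand_factors_pos (ha : 0 < a) (hw : w ∈ Icc (0 : ℝ) 1) :
    0 < 1 + a + (1 - a) * w ∧ 0 < 1 + a - (1 - a) * w := by
  obtain ⟨hw₀, hw₁⟩ := hw
  constructor <;> nlinarith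

lemma ratIntegrand_nonneg (ha : 0 < a) (hw : w ∈ Ioo (0 : ℝ) 1) : 0 ≤ ratIntegrand a w := by
  obtain ⟨hp, hm⟩ := integrand_factors_pos ha (Ioo_subset_Icc_self hw)
  unfold ratIntegrand
  positivity

lemma logIntegrand_nonneg (ha : 0 < a) (hw : w ∈ Ioo (0 : ℝ) 1) : 0 ≤ logIntegrand a w := by
  obtain ⟨hp, hm⟩ := integrand_factors_pos ha (Ioo_subset_Icc_self hw)
  obtain ⟨hw₀, hw₁⟩ := hw
  rw [logIntegrand, sub_nonneg, ← log_mul (by linarith) (by linarith), ← log_mul hp.ne' hm.ne']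
  have hgap : (1 + a + (1 - a) * w) * (1 + a - (1 - a) * w) - (1 + w) * (1 - w)
      = a ^ 2 * ((1 + w) * (1 - w)) + 2 * a * (1 + w ^ 2) := by ring
  have : 0 < (1 + w) * (1 - w) := mul_pos (by linarith) (by linarith)
  exact log_le_log this (by nlinarith)

lemma div_quadratic_eq_ratIntegrand (ha : 0 < a) {s : ℝ} (hs : 1 < s) :
    (a + a ^ 2) / ((2 * a * s + (a ^ 2 + 1)) * √(s ^ 2 - 1))
      = ratIntegrand a (tanhHalf s) / ((s + 1) * √(s ^ 2 - 1)) := by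
  have hw := tanhHalf_sq_mul hs
  obtain ⟨hp, hm⟩ := integrand_factors_pos ha ⟨(tanhHalf_pos hs).le, (tanhHalf_lt_one hs).le⟩
  have hr : 0 < √(s ^ 2 - 1) := sqrt_pos.2 (by nlinarith)
  have hq : 0 < 2 * a * s + (a ^ 2 + 1) := by nlinarith
  rw [ratIntegrand]
  field_simp
  linear_combination (-(1 + a) * (1 - a) ^ 2) * hw

lemma log_quadratic_eq_logIntegrand (ha : 0 < a) {s : ℝ} (hs : 1 < s) :
    log (2 * a * s + (a ^ 2 + 1)) = logIntegrand a (tanhHalf s) := by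
  set w := tanhHalf s
  have hw := tanhHalf_sq_mul hs
  have hw₀ := tanhHalf_pos hs
  have hw₁ := tanhHalf_lt_one hs
  obtain ⟨hp, hm⟩ := integrand_factors_pos ha ⟨hw₀.le, hw₁.le⟩
  have hq : 0 < 2 * a * s + (a ^ 2 + 1) := by nlinarith
  have key : (2 * a * s + (a ^ 2 + 1)) * ((1 + w) * (1 - w))
      = (1 + a + (1 - a) * w) * (1 + a - (1 - a) * w) := by
    linear_combination (-2 * a) * hw
  rw [logIntegrand, ← log_mul hp.ne' hm.ne', ← key, log_mul hq.ne' (by nlinarith),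
    log_mul (by linarith) (by linarith)]
  ring

theorem integral_ratIntegrand_of_ne_one (ha : 0 < a) (ha₁ : a ≠ 1) :
    ∫ s in Ioi (1 : ℝ), ratIntegrand a (tanhHalf s) / ((s + 1) * √(s ^ 2 - 1))
      = a * log a / (a - 1) := by
  have hd : 1 - a ≠ 0 := sub_ne_zero.2 ha₁.symm
  rw [integral_Ioi_one_comp_tanhHalf_div (H := fun w =>
      a / (1 - a) * (log (1 + a + (1 - a) * w) - log (1 + a - (1 - a) * w)))
    ?_ ?_ fun w hw => ratIntegrand_nonneg ha hw]
  · rw [mul_zero, add_zero, sub_zero, sub_self, mul_zero, sub_zero,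
      show 1 + a + (1 - a) * 1 = 2 by ring, show 1 + a - (1 - a) * 1 = 2 * a by ring,
      log_mul two_ne_zero ha.ne']
    field_simp
    ring
  · exact continuousOn_const.mul
      ((ContinuousOn.log (by fun_prop) fun w hw => (integrand_factors_pos ha hw).1.ne').sub
        (ContinuousOn.log (by fun_prop) fun w hw => (integrand_factors_pos ha hw).2.ne'))
  · intro w hw
    obtain ⟨hp, hm⟩ := integrand_factors_pos ha (Ioo_subset_Icc_self hw)
    have hP := (((hasDerivAt_id w).const_mul (1 - a)).const_add (1 + a)).log hp.ne'
    have hM := (((hasDerivAt_id w).const_mul (1 - a)).const_sub (1 + a)).log hm.ne'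
    have hH : HasDerivAt (fun w =>
        a / (1 - a) * (log (1 + a + (1 - a) * w) - log (1 + a - (1 - a) * w))) _ w :=
      (hP.sub hM).const_mul (a / (1 - a))
    convert hH using 1
    simp only [ratIntegrand, id]
    field_simp
    ring

theorem integral_ratIntegrand_one :
    ∫ s in Ioi (1 : ℝ), ratIntegrand 1 (tanhHalf s) / ((s + 1) * √(s ^ 2 - 1)) = 1 := by
  rw [integral_Ioi_one_comp_tanhHalf_div (H := id) continuousOn_id (fun w _ => ?_)
    fun w hw => ratIntegrand_nonneg one_pos hw]
  · simp
  · rw [show ratIntegrand 1 w = 1 by norm_num [ratIntegrand]]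
    exact hasDerivAt_id w

theorem integral_logIntegrand_of_ne_one (ha : 0 < a) (ha₁ : a ≠ 1) :
    ∫ s in Ioi (1 : ℝ), logIntegrand a (tanhHalf s) / ((s + 1) * √(s ^ 2 - 1))
      = 2 * (a * log a / (a - 1)) := by
  have hd : 1 - a ≠ 0 := sub_ne_zero.2 ha₁.symm
  rw [integral_Ioi_one_comp_tanhHalf_div
    (H := fun w => mulLogDiff (1 + a) (1 - a) w / (1 - a) - mulLogDiff 1 1 w)
    (by fun_prop) (fun w hw => ?_) fun w hw => logIntegrand_nonneg ha hw]
  · rw [mulLogDiff_zero, mulLogDiff_zero, mulLogDiff, mulLogDiff,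
      show 1 + a + (1 - a) * 1 = 2 by ring, show 1 + a - (1 - a) * 1 = 2 * a by ring,
      log_mul two_ne_zero ha.ne']
    norm_num
    field_simp
    ring
  · obtain ⟨hp, hm⟩ := integrand_factors_pos ha (Ioo_subset_Icc_self hw)
    obtain ⟨hw₀, hw₁⟩ := hw
    have hK : HasDerivAt
        (fun w => mulLogDiff (1 + a) (1 - a) w / (1 - a) - mulLogDiff 1 1 w) _ w :=
      ((hasDerivAt_mulLogDiff hp.ne' hm.ne').div_const (1 - a)).sub
        (hasDerivAt_mulLogDiff (c := 1) (d := 1) (by linarith) (by linarith))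
    convert hK using 1
    simp only [logIntegrand, one_mul]
    field_simp
    ring

theorem integral_logIntegrand_one :
    ∫ s in Ioi (1 : ℝ), logIntegrand 1 (tanhHalf s) / ((s + 1) * √(s ^ 2 - 1)) = 2 := by
  rw [integral_Ioi_one_comp_tanhHalf_div (H := fun w => (2 * log 2 + 2) * w - mulLogDiff 1 1 w)
    (by fun_prop) (fun w hw => ?_) fun w hw => logIntegrand_nonneg one_pos hw]
  · norm_num [mulLogDiff]
  · obtain ⟨hw₀, hw₁⟩ := hw
    have hK : HasDerivAt (fun w => (2 * log 2 + 2) * w - mulLogDiff 1 1 w) _ w :=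
      ((hasDerivAt_id w).const_mul _).sub
        (hasDerivAt_mulLogDiff (c := 1) (d := 1) (by linarith) (by linarith))
    convert hK using 1
    norm_num [logIntegrand]
    exact (two_mul _).symm

theorem integral_logIntegrand_eq_two_mul (ha : 0 < a) :
    ∫ s in Ioi (1 : ℝ), logIntegrand a (tanhHalf s) / ((s + 1) * √(s ^ 2 - 1))
      = 2 * ∫ s in Ioi (1 : ℝ), ratIntegrand a (tanhHalf s) / ((s + 1) * √(s ^ 2 - 1)) := by
  rcases eq_or_ne a 1 with rfl | ha₁
  · rw [integral_logIntegrand_one, integral_ratIntegrand_one, mul_one]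
  · rw [integral_logIntegrand_of_ne_one ha ha₁, integral_ratIntegrand_of_ne_one ha ha₁]

theorem neg_integral_div_quadratic_add_half_integral_log_quadratic (ha : 0 ≤ a) :
    -(∫ s in Ioi (1 : ℝ), (a + a ^ 2) / ((2 * a * s + (a ^ 2 + 1)) * √(s ^ 2 - 1)))
      + (1 / 2) * ∫ s in Ioi (1 : ℝ),
          log (2 * a * s + (a ^ 2 + 1)) / ((s + 1) * √(s ^ 2 - 1)) = 0 := by
  rcases ha.eq_or_lt with rfl | ha
  · simp
  have hrat : ∫ s in Ioi (1 : ℝ), (a + a ^ 2) / ((2 * a * s + (a ^ 2 + 1)) * √(s ^ 2 - 1))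
      = ∫ s in Ioi (1 : ℝ), ratIntegrand a (tanhHalf s) / ((s + 1) * √(s ^ 2 - 1)) :=
    setIntegral_congr_fun measurableSet_Ioi fun s hs => div_quadratic_eq_ratIntegrand ha hs
  have hlog : ∫ s in Ioi (1 : ℝ), log (2 * a * s + (a ^ 2 + 1)) / ((s + 1) * √(s ^ 2 - 1))
      = ∫ s in Ioi (1 : ℝ), logIntegrand a (tanhHalf s) / ((s + 1) * √(s ^ 2 - 1)) :=
    setIntegral_congr_fun measurableSet_Ioi fun s hs =>
      congrArg (· / ((s + 1) * √(s ^ 2 - 1))) (log_quadratic_eq_logIntegrand ha hs)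
  rw [hrat, hlog, integral_logIntegrand_eq_two_mul ha]
  ring

end

/-- For A, B real with A⁴ − B² = −1 (so B² = A⁴ + 1), the imaginary part of F₂ vanishes:
−∫₁^∞ (A² + A⁴)/((2A²s + B²)√(s² − 1)) ds
  + (1/2)∫₁^∞ log(2A²s + B²)/((s + 1)√(s² − 1)) ds = 0. -/
theorem im_F2_eq_zero (A B : ℝ) (hAB : A ^ 4 - B ^ 2 = -1) :
    -(∫ s in Ioi (1:ℝ),
        (A ^ 2 + A ^ 4) / ((2 * A ^ 2 * s + B ^ 2) * Real.sqrt (s ^ 2 - 1)))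
      + (1/2) * ∫ s in Ioi (1:ℝ),
          Real.log (2 * A ^ 2 * s + B ^ 2) / ((s + 1) * Real.sqrt (s ^ 2 - 1))
      = 0 := by
  rw [show B ^ 2 = (A ^ 2) ^ 2 + 1 by linear_combination -hAB, show A ^ 4 = (A ^ 2) ^ 2 by ring]
  exact neg_integral_div_quadratic_add_half_integral_log_quadratic (sq_nonneg A)
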